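/- arXiv:2501.11268 — 2 statements merged into one kernel-verified Lean document; each statement's English description precedes it below -/
import Mathlib

section
/- Let k ≤ N, z̄ ∈ ℝ^N with ‖z̄‖₀ = k, and c̄ ∈ ℝ, and set ξ̄_i = 1 − y_i(z̄^⊤ r_i + c̄) for i ∈ [m]. Suppose ∑_{i=1}^m y_i ξ̄_i = 0 and, for every index j with z̄_j ≠ 0, (G z̄)_j = 2C ∑_{i=1}^m ξ̄_i y_i (r_i)_j. Then (z̄, c̄) is a local minimizer of F(z, c) = (1/2) z^⊤ G z + C ∑_{i=1}^m (1 − y_i(z^⊤ r_i + c))² over the set {(z, c) ∈ ℝ^N × ℝ : ‖z‖₀ ≤ k}. -/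
open Matrix Finset Filter Topology

/-!
Near `z̄`, every coordinate in the support of `z̄` stays nonzero, so a nearby `z` with
`‖z‖₀ ≤ ‖z̄‖₀` has exactly the support of `z̄`. On that face the objective is a convex quadratic
whose gradient at `(z̄, c̄)` vanishes by the stationarity conditions (the `c`-component is
`∑ yᵢ ξ̄ᵢ = 0`), so `(z̄, c̄)` minimizes it there.
-/

theorem Matrix.PosSemidef.dotProduct_mulVec_tangent_le {ι : Type*} [Fintype ι]
    {G : Matrix ι ι ℝ} (hG : G.PosSemidef) (x z : ι → ℝ) :
    x ⬝ᵥ G *ᵥ x + 2 * ((z - x) ⬝ᵥ G *ᵥ x) ≤ z ⬝ᵥ G *ᵥ z := by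
  have hsymm : x ⬝ᵥ G *ᵥ (z - x) = (z - x) ⬝ᵥ G *ᵥ x := by
    rw [dotProduct_mulVec, ← mulVec_transpose, dotProduct_comm,
      ← conjTranspose_eq_transpose_of_trivial, hG.isHermitian.eq]
  have hd := hG.dotProduct_mulVec_nonneg (z - x)
  rw [star_trivial] at hd
  have hz : z = x + (z - x) := (add_sub_cancel x z).symm
  rw [hz, mulVec_add, dotProduct_add, add_dotProduct, add_dotProduct, ← hz, hsymm]
  linarith

theorem dotProduct_congr_of_eqOn_support {ι R : Type*} [Fintype ι] [NonUnitalNonAssocSemiring R]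
    {d u v : ι → R} (h : ∀ j, d j ≠ 0 → u j = v j) : d ⬝ᵥ u = d ⬝ᵥ v :=
  sum_congr rfl fun j _ => by by_cases hj : d j = 0 <;> simp [hj, h]

theorem eventually_eq_zero_of_card_support_le {ι M : Type*} [Fintype ι] [TopologicalSpace M]
    [T1Space M] [Zero M] [DecidableEq M] (x : ι → M) :
    ∀ᶠ z in 𝓝[{z | (univ.filter fun j => z j ≠ 0).card ≤ (univ.filter fun j => x j ≠ 0).card}] x,
      ∀ j, x j = 0 → z j = 0 := by
  have hsupp : ∀ᶠ z in 𝓝 x, ∀ j, x j ≠ 0 → z j ≠ 0 :=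
    eventually_all.2 fun j => eventually_imp_distrib_left.2
      (continuous_apply j).continuousAt.eventually_ne
  filter_upwards [nhdsWithin_le_nhds hsupp, self_mem_nhdsWithin] with z hsub hcard j hxj
  have heq : (univ.filter fun j => x j ≠ 0) = univ.filter fun j => z j ≠ 0 :=
    eq_of_subset_of_card_le (fun j hj => by simpa using hsub j (by simpa using hj)) hcard
  by_contra hzj
  have hj : j ∈ univ.filter fun j => z j ≠ 0 := by simp [hzj]
  simp [← heq, hxj] at hj

noncomputable section LeastSquaresQSVM

variable {ι κ : Type*} [Fintype ι] (r : κ → ι → ℝ) (y : κ → ℝ)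

def lsResidual (p : (ι → ℝ) × ℝ) (i : κ) : ℝ := 1 - y i * (p.1 ⬝ᵥ r i + p.2)

theorem lsResidual_eq (p q : (ι → ℝ) × ℝ) (i : κ) :
    lsResidual r y q i = lsResidual r y p i - y i * ((q.1 - p.1) ⬝ᵥ r i + (q.2 - p.2)) := by
  simp only [lsResidual, sub_dotProduct]
  ring

variable [Fintype κ] (G : Matrix ι ι ℝ) (C : ℝ)

def lsObjective (p : (ι → ℝ) × ℝ) : ℝ :=
  (1 / 2) * (p.1 ⬝ᵥ (G *ᵥ p.1)) + C * ∑ i, lsResidual r y p i ^ 2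

variable {r y G C}

theorem lsObjective_le_of_stationary (hG : G.PosSemidef) (hC : 0 ≤ C) {p q : (ι → ℝ) × ℝ}
    (hsum : ∑ i, y i * lsResidual r y p i = 0)
    (hstat : ∀ j, q.1 j ≠ p.1 j →
      (G *ᵥ p.1) j = 2 * C * ∑ i, lsResidual r y p i * y i * r i j) :
    lsObjective r y G C p ≤ lsObjective r y G C q := by
  obtain ⟨zbar, cbar⟩ := p
  obtain ⟨z, c⟩ := q
  set ξ := lsResidual r y (zbar, cbar)
  set t : κ → ℝ := fun i => (z - zbar) ⬝ᵥ r i + (c - cbar)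
  have hgrad : (z - zbar) ⬝ᵥ G *ᵥ zbar = (z - zbar) ⬝ᵥ ∑ i, (2 * C * (ξ i * y i)) • r i :=
    dotProduct_congr_of_eqOn_support fun j hj => by
      simp [hstat j (sub_ne_zero.1 hj), Finset.sum_apply, mul_sum, mul_assoc]
  have hlin : (z - zbar) ⬝ᵥ G *ᵥ zbar = 2 * C * ∑ i, ξ i * y i * t i := by
    simp only [hgrad, dotProduct_sum, dotProduct_smul, smul_eq_mul, t, mul_add, sum_add_distrib,
      ← sum_mul, mul_comm (ξ _) (y _), hsum]
    simp [mul_sum, mul_assoc]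
  have hsq : ∑ i, (ξ i ^ 2 - 2 * (ξ i * y i * t i)) ≤ ∑ i, lsResidual r y (z, c) i ^ 2 :=
    sum_le_sum fun i _ => by
      rw [lsResidual_eq r y (zbar, cbar) (z, c)]
      nlinarith [sq_nonneg (y i * t i)]
  rw [sum_sub_distrib, ← mul_sum] at hsq
  have hquad := hG.dotProduct_mulVec_tangent_le zbar z
  simp only [lsObjective]
  linarith [mul_le_mul_of_nonneg_left hsq hC]

end LeastSquaresQSVM

theorem lu_zhang_stationary_is_local_min_ls_general
    (m N k : ℕ)
    (r : Fin m → Fin N → ℝ) (y : Fin m → ℝ)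
    (G : Matrix (Fin N) (Fin N) ℝ) (hG : G.PosSemidef)
    (C : ℝ) (hC : 0 < C)
    (zbar : Fin N → ℝ) (cbar : ℝ)
    (hsupp : (Finset.univ.filter fun j => zbar j ≠ 0).card = k)
    (ξbar : Fin m → ℝ)
    (hξ : ∀ i, ξbar i = 1 - y i * (zbar ⬝ᵥ r i + cbar))
    (hsum : ∑ i, y i * ξbar i = 0)
    (hstat : ∀ j, zbar j ≠ 0 → (G *ᵥ zbar) j = 2 * C * ∑ i, ξbar i * y i * r i j) :
    IsLocalMinOn
      (fun p : (Fin N → ℝ) × ℝ =>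
        (1 / 2) * (p.1 ⬝ᵥ (G *ᵥ p.1)) + C * ∑ i, (1 - y i * (p.1 ⬝ᵥ r i + p.2)) ^ 2)
      {p : (Fin N → ℝ) × ℝ | (Finset.univ.filter fun j => p.1 j ≠ 0).card ≤ k}
      (zbar, cbar) := by
  subst hsupp
  obtain rfl : ξbar = lsResidual r y (zbar, cbar) := funext hξ
  have hface : ∀ᶠ p in 𝓝[{p : (Fin N → ℝ) × ℝ |
      (univ.filter fun j => p.1 j ≠ 0).card ≤ (univ.filter fun j => zbar j ≠ 0).card}] (zbar, cbar),
      ∀ j, zbar j = 0 → p.1 j = 0 :=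
    ((continuous_fst.continuousWithinAt (x := (zbar, cbar))).tendsto_nhdsWithin
      fun _ hp => hp).eventually (eventually_eq_zero_of_card_support_le zbar)
  filter_upwards [hface] with p hp
  exact lsObjective_le_of_stationary hG hC.le hsum fun j hj =>
    hstat j fun hzj => hj ((hp j hzj).trans hzj.symm)

/-- If `(z̄, c̄)` with `‖z̄‖₀ = k` satisfies the Lu–Zhang stationarity
conditions for the least-squares `ℓ₀`-regularized QSVM (with `ξ̄_i = 1 − y_i(z̄ᵀr_i + c̄)`,
`∑ y_i ξ̄_i = 0`, and `(Gz̄)_j = 2C ∑ ξ̄_i y_i (r_i)_j` on the support of `z̄`), then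
`(z̄, c̄)` is a local minimizer of
`F(z, c) = (1/2) zᵀGz + C ∑ (1 − y_i(zᵀr_i + c))²` over `{(z, c) : ‖z‖₀ ≤ k}`. -/
theorem lu_zhang_stationary_is_local_min_ls
    (m N k : ℕ) (hm : 1 ≤ m) (hN : 1 ≤ N) (hk : k ≤ N)
    (r : Fin m → Fin N → ℝ) (y : Fin m → ℝ) (hy : ∀ i, y i = 1 ∨ y i = -1)
    (G : Matrix (Fin N) (Fin N) ℝ) (hG : G.PosSemidef)
    (C : ℝ) (hC : 0 < C)
    (zbar : Fin N → ℝ) (cbar : ℝ)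
    (hsupp : (Finset.univ.filter fun j => zbar j ≠ 0).card = k)
    (ξbar : Fin m → ℝ)
    (hξ : ∀ i, ξbar i = 1 - y i * (zbar ⬝ᵥ r i + cbar))
    (hsum : ∑ i, y i * ξbar i = 0)
    (hstat : ∀ j, zbar j ≠ 0 → (G *ᵥ zbar) j = 2 * C * ∑ i, ξbar i * y i * r i j) :
    IsLocalMinOn
      (fun p : (Fin N → ℝ) × ℝ =>
        (1 / 2) * (p.1 ⬝ᵥ (G *ᵥ p.1)) + C * ∑ i, (1 - y i * (p.1 ⬝ᵥ r i + p.2)) ^ 2)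
      {p : (Fin N → ℝ) × ℝ | (Finset.univ.filter fun j => p.1 j ≠ 0).card ≤ k}
      (zbar, cbar) :=
  lu_zhang_stationary_is_local_min_ls_general m N k r y G hG C hC zbar cbar hsupp ξbar hξ hsum hstat
end

section
/- Let k ≤ N. Suppose z̄ ∈ ℝ^N with ‖z̄‖₀ = k, c̄ ∈ ℝ, and ξ̄ ∈ ℝ^m satisfy y_i(z̄^⊤ r_i + c̄) ≥ 1 − ξ̄_i and ξ̄_i ≥ 0 for all i ∈ [m], and suppose there exist λ, λ̄ ∈ ℝ^m with λ_i ≥ 0 and λ̄_i ≥ 0 such that: (G z̄)_j = ∑_{i=1}^m λ_i y_i (r_i)_j for every index j with z̄_j ≠ 0; ∑_{i=1}^m λ_i y_i = 0; λ_i + λ̄_i = C for all i; λ_i (y_i(z̄^⊤ r_i + c̄) − 1 + ξ̄_i) = 0 for all i; and λ̄_i ξ̄_i = 0 for all i. Then (z̄, c̄, ξ̄) is a local minimizer of (1/2) z^⊤ G z + C ∑_{i=1}^m ξ_i over the set {(z, c, ξ) ∈ ℝ^N × ℝ × ℝ^m : y_i(z^⊤ r_i + c) ≥ 1 − ξ_i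 and ξ_i ≥ 0 for all i, and ‖z‖₀ ≤ k}. -/
open Matrix Finset

/-!
Near `z̄` no nonzero coordinate of `z̄` can vanish, so the constraint `‖z‖₀ ≤ k = ‖z̄‖₀` forces
`supp z = supp z̄`. On feasible points with that support the problem is a convex quadratic program
whose KKT conditions are exactly the Lu–Zhang conditions, and the usual Lagrangian argument shows
that `(z̄, c̄, ξ̄)` minimizes it: the quadratic form lies above its tangent at `z̄`, the tangent term
is paired against the multipliers by stationarity, and complementary slackness makes every
per-sample contribution nonnegative.
-/

theorem Matrix.PosSemidef.dotProduct_mulVec_add_two_mul_le {n : Type*} [Fintype n]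
    {G : Matrix n n ℝ} (hG : G.PosSemidef) (x z : n → ℝ) :
    x ⬝ᵥ (G *ᵥ x) + 2 * ((z - x) ⬝ᵥ (G *ᵥ x)) ≤ z ⬝ᵥ (G *ᵥ z) := by
  have hsymm : x ⬝ᵥ (G *ᵥ (z - x)) = (z - x) ⬝ᵥ (G *ᵥ x) := by
    rw [dotProduct_mulVec, ← mulVec_transpose, (isHermitian_iff_isSymm.mp hG.1).eq,
      dotProduct_comm]
  have hquad : 0 ≤ (z - x) ⬝ᵥ (G *ᵥ (z - x)) := by
    simpa using hG.dotProduct_mulVec_nonneg (z - x)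
  calc x ⬝ᵥ (G *ᵥ x) + 2 * ((z - x) ⬝ᵥ (G *ᵥ x))
      ≤ x ⬝ᵥ (G *ᵥ x) + 2 * ((z - x) ⬝ᵥ (G *ᵥ x)) + (z - x) ⬝ᵥ (G *ᵥ (z - x)) := by
        linarith
    _ = z ⬝ᵥ (G *ᵥ z) := by
        obtain ⟨w, rfl⟩ : ∃ w, z = x + w := ⟨z - x, by abel⟩
        simp only [add_sub_cancel_left, mulVec_add, dotProduct_add, add_dotProduct] at hsymm ⊢
        linarith

theorem dotProduct_eq_of_eqOn_support {ι R : Type*} [Fintype ι] [Semiring R] {w u v : ι → R}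
    (h : Set.EqOn u v (Function.support w)) : w ⬝ᵥ u = w ⬝ᵥ v :=
  Finset.sum_congr rfl fun j _ => by
    by_cases hj : w j = 0
    · simp [hj]
    · rw [h hj]

theorem eventually_support_subset_support {ι M : Type*} [Finite ι] [TopologicalSpace M]
    [T1Space M] [Zero M] (x : ι → M) :
    ∀ᶠ z in nhds x, Function.support x ⊆ Function.support z := by
  simp only [Function.support_subset_iff, Function.mem_support]
  exact Filter.eventually_all.mpr fun j => by
    by_cases hj : x j = 0
    · simp [hj]
    · filter_upwards [(continuous_apply j).continuousAt.eventually_ne hj] with z hz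
      exact fun _ => hz

theorem support_eq_of_support_subset_of_card_le {ι M : Type*} [Fintype ι] [Zero M]
    [DecidableEq M] {x z : ι → M} (hsub : Function.support x ⊆ Function.support z)
    (hcard : #{j | z j ≠ 0} ≤ #{j | x j ≠ 0}) :
    Function.support z = Function.support x := by
  have := Finset.eq_of_subset_of_card_le (fun j => by simpa using @hsub j) hcard
  ext j
  simpa using (Finset.ext_iff.mp this j).symm

theorem hinge_kkt_increment_nonneg {lam lamBar C a abar ξ ξbar : ℝ}
    (hlam : 0 ≤ lam) (hlamBar : 0 ≤ lamBar) (hsplit : lam + lamBar = C)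
    (hcomp1 : lam * (abar - 1 + ξbar) = 0) (hcomp2 : lamBar * ξbar = 0)
    (ha : 1 - ξ ≤ a) (hξ : 0 ≤ ξ) :
    0 ≤ lam * (a - abar) + C * (ξ - ξbar) := by
  -- complementary slackness removes the terms at the reference point
  have key : lam * (a - abar) + C * (ξ - ξbar) = lam * (a - 1 + ξ) + lamBar * ξ := by
    linear_combination (ξ - ξbar) * hsplit.symm - hcomp1 - hcomp2
  rw [key]
  exact add_nonneg (mul_nonneg hlam (by linarith)) (mul_nonneg hlamBar hξ)

section HingeQSVM

variable {ι κ : Type*} [Fintype ι] [Fintype κ] {r : κ → ι → ℝ} {y : κ → ℝ}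
  {G : Matrix ι ι ℝ} {C : ℝ} {zbar : ι → ℝ} {cbar : ℝ} {ξbar : κ → ℝ} {lam lamBar : κ → ℝ}

theorem dotProduct_mulVec_eq_sum_of_stationary
    (hstat : ∀ j, zbar j ≠ 0 → (G *ᵥ zbar) j = ∑ i, lam i * y i * r i j)
    {w : ι → ℝ} (hw : Function.support w ⊆ Function.support zbar) :
    w ⬝ᵥ (G *ᵥ zbar) = ∑ i, lam i * y i * (w ⬝ᵥ r i) := by
  rw [dotProduct_eq_of_eqOn_support (v := fun j => ∑ i, lam i * y i * r i j)
    fun j hj => hstat j (hw hj)]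
  simp only [dotProduct, Finset.mul_sum]
  rw [Finset.sum_comm]
  exact Finset.sum_congr rfl fun i _ => Finset.sum_congr rfl fun j _ => by ring

theorem hinge_objective_le_of_support_subset (hG : G.PosSemidef)
    (hlam : ∀ i, 0 ≤ lam i) (hlamBar : ∀ i, 0 ≤ lamBar i)
    (hstat : ∀ j, zbar j ≠ 0 → (G *ᵥ zbar) j = ∑ i, lam i * y i * r i j)
    (hsumlam : ∑ i, lam i * y i = 0)
    (hC_split : ∀ i, lam i + lamBar i = C)
    (hcomp1 : ∀ i, lam i * (y i * (zbar ⬝ᵥ r i + cbar) - 1 + ξbar i) = 0)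
    (hcomp2 : ∀ i, lamBar i * ξbar i = 0)
    {z : ι → ℝ} {c : ℝ} {ξ : κ → ℝ}
    (hfeas : ∀ i, 1 - ξ i ≤ y i * (z ⬝ᵥ r i + c) ∧ 0 ≤ ξ i)
    (hsupp : Function.support z ⊆ Function.support zbar) :
    (1 / 2) * (zbar ⬝ᵥ (G *ᵥ zbar)) + C * ∑ i, ξbar i ≤
      (1 / 2) * (z ⬝ᵥ (G *ᵥ z)) + C * ∑ i, ξ i := by
  have hgrad := dotProduct_mulVec_eq_sum_of_stationary hstat (w := z - zbar)
    ((Function.support_sub _ _).trans (Set.union_subset hsupp le_rfl))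
  have hincr : 0 ≤ ∑ i, (lam i * (y i * (z ⬝ᵥ r i + c) - y i * (zbar ⬝ᵥ r i + cbar)) +
      C * (ξ i - ξbar i)) := Finset.sum_nonneg fun i _ =>
    hinge_kkt_increment_nonneg (hlam i) (hlamBar i) (hC_split i) (hcomp1 i) (hcomp2 i)
      (hfeas i).1 (hfeas i).2
  have hsum : ∑ i, (lam i * (y i * (z ⬝ᵥ r i + c) - y i * (zbar ⬝ᵥ r i + cbar)) +
      C * (ξ i - ξbar i)) = ∑ i, lam i * y i * ((z - zbar) ⬝ᵥ r i) +
        (c - cbar) * ∑ i, lam i * y i + C * (∑ i, ξ i - ∑ i, ξbar i) := by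
    rw [← Finset.sum_sub_distrib, Finset.mul_sum, Finset.mul_sum, ← Finset.sum_add_distrib,
      ← Finset.sum_add_distrib]
    exact Finset.sum_congr rfl fun i _ => by rw [sub_dotProduct]; ring
  have htangent := hG.dotProduct_mulVec_add_two_mul_le zbar z
  rw [hsumlam] at hsum
  linarith

end HingeQSVM

theorem lu_zhang_stationary_is_local_min_hinge_general
    (m N k : ℕ)
    (r : Fin m → Fin N → ℝ) (y : Fin m → ℝ)
    (G : Matrix (Fin N) (Fin N) ℝ) (hG : G.PosSemidef)
    (C : ℝ)
    (zbar : Fin N → ℝ) (cbar : ℝ) (ξbar : Fin m → ℝ)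
    (hsupp : (Finset.univ.filter fun j => zbar j ≠ 0).card = k)
    (lam lamBar : Fin m → ℝ)
    (hlam : ∀ i, 0 ≤ lam i) (hlamBar : ∀ i, 0 ≤ lamBar i)
    (hstat : ∀ j, zbar j ≠ 0 → (G *ᵥ zbar) j = ∑ i, lam i * y i * r i j)
    (hsumlam : ∑ i, lam i * y i = 0)
    (hC_split : ∀ i, lam i + lamBar i = C)
    (hcomp1 : ∀ i, lam i * (y i * (zbar ⬝ᵥ r i + cbar) - 1 + ξbar i) = 0)
    (hcomp2 : ∀ i, lamBar i * ξbar i = 0) :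
    IsLocalMinOn
      (fun p : (Fin N → ℝ) × ℝ × (Fin m → ℝ) =>
        (1 / 2) * (p.1 ⬝ᵥ (G *ᵥ p.1)) + C * ∑ i, p.2.2 i)
      {p : (Fin N → ℝ) × ℝ × (Fin m → ℝ) |
        (∀ i, 1 - p.2.2 i ≤ y i * (p.1 ⬝ᵥ r i + p.2.1) ∧ 0 ≤ p.2.2 i) ∧
        (Finset.univ.filter fun j => p.1 j ≠ 0).card ≤ k}
      (zbar, cbar, ξbar) := by
  have hnear : ∀ᶠ p : (Fin N → ℝ) × ℝ × (Fin m → ℝ) in nhds (zbar, cbar, ξbar),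
      Function.support zbar ⊆ Function.support p.1 :=
    (continuous_fst.tendsto (zbar, cbar, ξbar)).eventually
      (eventually_support_subset_support zbar)
  filter_upwards [nhdsWithin_le_nhds hnear, self_mem_nhdsWithin]
    with ⟨z, c, ξ⟩ hsub ⟨hfeas, hcard⟩
  exact hinge_objective_le_of_support_subset hG hlam hlamBar hstat hsumlam hC_split hcomp1
    hcomp2 hfeas (support_eq_of_support_subset_of_card_le hsub (hsupp ▸ hcard)).subset

/-- If `(z̄, c̄, ξ̄)` with `‖z̄‖₀ = k` is feasible for the hinge-loss
`ℓ₀`-regularized QSVM and satisfies the Lu–Zhang (KKT-type) stationarity conditions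
with multipliers `λ, λ̄ ≥ 0`, then `(z̄, c̄, ξ̄)` is a local minimizer of
`(1/2) zᵀGz + C ∑ ξ_i` over the set of feasible points with `‖z‖₀ ≤ k`. -/
theorem lu_zhang_stationary_is_local_min_hinge
    (m N k : ℕ) (hm : 1 ≤ m) (hN : 1 ≤ N) (hk : k ≤ N)
    (r : Fin m → Fin N → ℝ) (y : Fin m → ℝ) (hy : ∀ i, y i = 1 ∨ y i = -1)
    (G : Matrix (Fin N) (Fin N) ℝ) (hG : G.PosSemidef)
    (C : ℝ) (hC : 0 < C)
    (zbar : Fin N → ℝ) (cbar : ℝ) (ξbar : Fin m → ℝ)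
    (hsupp : (Finset.univ.filter fun j => zbar j ≠ 0).card = k)
    (hfeas : ∀ i, 1 - ξbar i ≤ y i * (zbar ⬝ᵥ r i + cbar) ∧ 0 ≤ ξbar i)
    (lam lamBar : Fin m → ℝ)
    (hlam : ∀ i, 0 ≤ lam i) (hlamBar : ∀ i, 0 ≤ lamBar i)
    (hstat : ∀ j, zbar j ≠ 0 → (G *ᵥ zbar) j = ∑ i, lam i * y i * r i j)
    (hsumlam : ∑ i, lam i * y i = 0)
    (hC_split : ∀ i, lam i + lamBar i = C)
    (hcomp1 : ∀ i, lam i * (y i * (zbar ⬝ᵥ r i + cbar) - 1 + ξbar i) = 0)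
    (hcomp2 : ∀ i, lamBar i * ξbar i = 0) :
    IsLocalMinOn
      (fun p : (Fin N → ℝ) × ℝ × (Fin m → ℝ) =>
        (1 / 2) * (p.1 ⬝ᵥ (G *ᵥ p.1)) + C * ∑ i, p.2.2 i)
      {p : (Fin N → ℝ) × ℝ × (Fin m → ℝ) |
        (∀ i, 1 - p.2.2 i ≤ y i * (p.1 ⬝ᵥ r i + p.2.1) ∧ 0 ≤ p.2.2 i) ∧
        (Finset.univ.filter fun j => p.1 j ≠ 0).card ≤ k}
      (zbar, cbar, ξbar) :=
  lu_zhang_stationary_is_local_min_hinge_general m N k r y G hG C zbar cbar ξbar hsupp lam lamBar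
    hlam hlamBar hstat hsumlam hC_split hcomp1 hcomp2
end
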